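/- arXiv:2009.03708 — 3 statements merged into one kernel-verified Lean document; each statement's English description precedes it below -/
import Mathlib

section
/- Every play of the Zeckendorf game starting from n copies of 1 terminates in a finite number of moves at the Zeckendorf decomposition of n: there is no infinite sequence of legal moves, and any state admitting no legal move is a set of distinct non-consecutive Fibonacci numbers summing to n. -/
/-- Fibonacci numbers indexed so that `zF 1 = 1`, `zF 2 = 2`,
`zF (i+1) = zF i + zF (i-1)`. -/
def zF (n : ℕ) : ℕ := Nat.fib (n + 1)

/-- The starting state of the Zeckendorf game on `n`: `n` copies of `F 1 = 1`.
States are multisets of indices `i`, the index `i` standing for `F i`. -/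
def zstart (n : ℕ) : Multiset ℕ := Multiset.replicate n 1

/-- Legal moves of the Zeckendorf game, on multisets of indices. -/
inductive ZMove : Multiset ℕ → Multiset ℕ → Prop
  | combine (i : ℕ) (M : Multiset ℕ) (hi : 2 ≤ i) :
      ZMove ({i - 1, i} + M) ({i + 1} + M)
  | combine1 (M : Multiset ℕ) : ZMove ({1, 1} + M) ({2} + M)
  | split2 (M : Multiset ℕ) : ZMove ({2, 2} + M) ({1, 3} + M)
  | split (i : ℕ) (M : Multiset ℕ) (hi : 3 ≤ i) :
      ZMove ({i, i} + M) ({i - 2, i + 1} + M)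

/-- `ZWins p S t M` : in the `p`-player Zeckendorf game where move number `t`
(counting from 0) is made by player `t % p`, the coalition `S` of players has a
strategy from state `M` at turn `t` guaranteeing that a member of `S` makes the
final move (the move producing a state with no legal moves). -/
inductive ZWins (p : ℕ) (S : Set ℕ) : ℕ → Multiset ℕ → Prop
  | mine_end (t : ℕ) (M M' : Multiset ℕ) (hS : t % p ∈ S) (hmv : ZMove M M')
      (h : ∀ N, ¬ ZMove M' N) : ZWins p S t M
  | mine_step (t : ℕ) (M M' : Multiset ℕ) (hS : t % p ∈ S) (hmv : ZMove M M')
      (h : ZWins p S (t + 1) M') : ZWins p S t M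
  | theirs (t : ℕ) (M : Multiset ℕ) (hS : t % p ∉ S) (hne : ∃ M', ZMove M M')
      (h : ∀ M', ZMove M M' → ZWins p S (t + 1) M') : ZWins p S t M

/-- The specific move `1 + 1 = 2`. -/
def MOneOne (M M' : Multiset ℕ) : Prop :=
  ({1, 1} : Multiset ℕ) ≤ M ∧ M' = M - {1, 1} + {2}

/-- The specific move `1 + 2 = 3`. -/
def MOneTwo (M M' : Multiset ℕ) : Prop :=
  ({1, 2} : Multiset ℕ) ≤ M ∧ M' = M - {1, 2} + {3}

/-- The specific move `2 + 2 = 1 + 3`. -/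
def MTwoTwo (M M' : Multiset ℕ) : Prop :=
  ({2, 2} : Multiset ℕ) ≤ M ∧ M' = M - {2, 2} + {1, 3}

/-!
Moves preserve the value `∑ F i`, since each one follows from `F (i+1) = F i + F (i-1)`.
They strictly decrease the potential `4 · #M + 2 · ∑ i + #{2 ∈ M}`, so every play is finite.
A state with no legal move has no repeated index (two copies of `i` could be combined or split)
and no two consecutive indices (they could be combined), which is the Zeckendorf condition.
-/

lemma zF_add_two (i : ℕ) : zF (i + 2) = zF (i + 1) + zF i := by
  simp only [zF, Nat.fib_add_two]
  ring

namespace ZMove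

def potential (M : Multiset ℕ) : ℕ := 4 * Multiset.card M + 2 * M.sum + M.count 2

lemma potential_add (A B : Multiset ℕ) : potential (A + B) = potential A + potential B := by
  simp only [potential, Multiset.card_add, Multiset.sum_add, Multiset.count_add]
  ring

/- Combining moves lower the number of summands, the splits `{i, i} → {i - 2, i + 1}` with
`i ≥ 3` lower the sum of indices, and the split `{2, 2} → {1, 3}` lowers the number of `2`s. -/
lemma potential_lt {M M' : Multiset ℕ} (h : ZMove M M') : potential M' < potential M := by
  cases h <;> rw [potential_add, potential_add] <;> apply Nat.add_lt_add_right <;>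
    simp only [potential, Multiset.insert_eq_cons, Multiset.card_cons, Multiset.card_singleton,
      Multiset.sum_cons, Multiset.sum_singleton, Multiset.count_cons, Multiset.count_singleton] <;>
    split_ifs <;> omega

theorem not_forall_apply_succ (f : ℕ → Multiset ℕ) : ¬ ∀ k, ZMove (f k) (f (k + 1)) :=
  fun h ↦ not_strictAnti_of_wellFoundedLT (potential ∘ f)
    (strictAnti_nat_of_succ_lt fun k ↦ (h k).potential_lt)

lemma map_zF_sum_eq {M M' : Multiset ℕ} (h : ZMove M M') :
    (M'.map zF).sum = (M.map zF).sum := by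
  cases h <;> simp only [Multiset.map_add, Multiset.sum_add, add_left_inj]
  case combine i K hi =>
    obtain ⟨j, rfl⟩ : ∃ j, i = j + 1 := ⟨i - 1, by omega⟩
    simp only [add_tsub_cancel_right, Multiset.insert_eq_cons, Multiset.map_cons,
      Multiset.map_singleton, zF_add_two, Multiset.sum_cons, Multiset.sum_singleton]
    ring
  case combine1 | split2 => rfl
  case split i K hi =>
    obtain ⟨j, rfl⟩ : ∃ j, i = j + 2 := ⟨i - 2, by omega⟩
    simp only [add_tsub_cancel_right, Multiset.insert_eq_cons, Multiset.map_cons,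
      Multiset.map_singleton, zF_add_two, Multiset.sum_cons, Multiset.sum_singleton]
    ring

lemma forall_one_le {M M' : Multiset ℕ} (h : ZMove M M') (hM : ∀ i ∈ M, 1 ≤ i) :
    ∀ i ∈ M', 1 ≤ i := by
  cases h <;>
    simp only [Multiset.insert_eq_cons, Multiset.mem_add, Multiset.mem_cons,
      Multiset.mem_singleton, or_imp, forall_and, forall_eq] at hM ⊢ <;>
    exact ⟨by omega, hM.2⟩

end ZMove

lemma forall_one_le_and_map_zF_sum_eq_of_reflTransGen {n : ℕ} {M : Multiset ℕ}
    (h : Relation.ReflTransGen ZMove (zstart n) M) :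
    (∀ i ∈ M, 1 ≤ i) ∧ (M.map zF).sum = n := by
  induction h with
  | refl => simp +contextual [zstart, Multiset.mem_replicate, zF]
  | tail _ hmove ih => exact ⟨hmove.forall_one_le ih.1, hmove.map_zF_sum_eq.trans ih.2⟩

lemma nodup_of_terminal {M : Multiset ℕ} (hpos : ∀ i ∈ M, 1 ≤ i) (hterm : ∀ N, ¬ ZMove M N) :
    M.Nodup := by
  refine Multiset.nodup_iff_count_le_one.2 fun a ↦ not_lt.1 fun ha ↦ ?_
  obtain ⟨K, rfl⟩ : ∃ K, M = {a, a} + K :=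
    Multiset.le_iff_exists_add.1 (by simpa using Multiset.le_count_iff_replicate_le.1 ha)
  have ha1 : 1 ≤ a := hpos a (by simp)
  rcases Nat.lt_or_ge a 3 with ha3 | ha3
  · interval_cases a
    · exact hterm _ (.combine1 K)
    · exact hterm _ (.split2 K)
  · exact hterm _ (.split a K ha3)

lemma succ_notMem_of_terminal {M : Multiset ℕ} (hpos : ∀ i ∈ M, 1 ≤ i)
    (hterm : ∀ N, ¬ ZMove M N) : ∀ i ∈ M, i + 1 ∉ M := by
  intro i hi hi'
  obtain ⟨K, rfl⟩ : ∃ K, M = {i, i + 1} + K := Multiset.le_iff_exists_add.1 <|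
    (Multiset.cons_le_of_notMem (by simp)).2 ⟨hi, by simpa using hi'⟩
  exact hterm _ (by simpa using ZMove.combine (i + 1) K (by have := hpos i hi; omega))

/-- The Zeckendorf game starting from `n` copies of 1 terminates: there is no
infinite sequence of legal moves, and any reachable state with no legal move is
a set of distinct non-consecutive Fibonacci numbers summing to `n`. -/
theorem stmt_3 (n : ℕ) :
    (¬ ∃ f : ℕ → Multiset ℕ, f 0 = zstart n ∧ ∀ k, ZMove (f k) (f (k + 1))) ∧
    (∀ M : Multiset ℕ, Relation.ReflTransGen ZMove (zstart n) M →
      (∀ N, ¬ ZMove M N) →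
      M.Nodup ∧ (∀ i ∈ M, 1 ≤ i) ∧ (∀ i ∈ M, i + 1 ∉ M) ∧
        (M.map zF).sum = n) := by
  refine ⟨fun ⟨f, _, hf⟩ ↦ ZMove.not_forall_apply_succ f hf, fun M hreach hterm ↦ ?_⟩
  obtain ⟨hpos, hsum⟩ := forall_one_le_and_map_zF_sum_eq_of_reflTransGen hreach
  exact ⟨nodup_of_terminal hpos hterm, hpos, succ_notMem_of_terminal hpos hterm, hsum⟩
end

section
/- A multiset of Fibonacci numbers admits no legal Zeckendorf game move if and only if its elements are distinct and no two are consecutive Fibonacci numbers. -/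
/-! Every move consumes either two copies of one index or two consecutive indices; conversely,
each such pair of positive indices feeds a move (`1,1` and `i-1,i` combine, `i,i` splits for
`i ≥ 2`). -/

theorem exists_zMove_of_two_le_count {M : Multiset ℕ} {a : ℕ} (ha : 1 ≤ a)
    (h : 2 ≤ M.count a) : ∃ N, ZMove M N := by
  obtain ⟨R, rfl⟩ := Multiset.le_iff_exists_add.mp (Multiset.le_count_iff_replicate_le.mp h)
  rcases (show a = 1 ∨ a = 2 ∨ 3 ≤ a by omega) with rfl | rfl | ha
  · exact ⟨_, .combine1 R⟩
  · exact ⟨_, .split2 R⟩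
  · exact ⟨_, .split a R ha⟩

theorem exists_zMove_of_succ_mem {M : Multiset ℕ} {i : ℕ} (hi : 1 ≤ i) (h : i ∈ M)
    (h' : i + 1 ∈ M) : ∃ N, ZMove M N := by
  have hle : ({i, i + 1} : Multiset ℕ) ≤ M :=
    (Multiset.le_iff_subset (by simp)).mpr (by simp [Multiset.subset_iff, h, h'])
  obtain ⟨R, rfl⟩ := Multiset.le_iff_exists_add.mp hle
  exact ⟨_, by simpa using ZMove.combine (i + 1) R (by omega)⟩

theorem ZMove.not_nodup_or_exists_succ_mem {M N : Multiset ℕ} (h : ZMove M N) :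
    ¬ M.Nodup ∨ ∃ i ∈ M, i + 1 ∈ M := by
  cases h with
  | combine i R hi => exact .inr ⟨i - 1, by simp, by simp [Nat.sub_add_cancel (by omega : 1 ≤ i)]⟩
  | combine1 _ | split2 _ | split _ _ _ => exact .inl (by simp)

/-- A multiset of Fibonacci numbers (indices `≥ 1`) admits no legal Zeckendorf
game move iff its elements are distinct and no two are consecutive. -/
theorem stmt_4 (M : Multiset ℕ) (hM : ∀ i ∈ M, 1 ≤ i) :
    (∀ N, ¬ ZMove M N) ↔ (M.Nodup ∧ ∀ i ∈ M, i + 1 ∉ M) := by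
  constructor
  · intro hstuck
    refine ⟨Multiset.nodup_iff_count_le_one.mpr fun a => ?_, fun i hi hi' => ?_⟩
    · by_contra! h
      obtain ⟨N, hN⟩ := exists_zMove_of_two_le_count (hM a (Multiset.count_pos.mp (by omega))) h
      exact hstuck N hN
    · obtain ⟨N, hN⟩ := exists_zMove_of_succ_mem (hM i hi) hi hi'
      exact hstuck N hN
  · rintro ⟨hnd, hcons⟩ N hmv
    rcases hmv.not_nodup_or_exists_succ_mem with h | ⟨i, hi, hi'⟩
    · exact h hnd
    · exact hcons i hi hi'
end

section
/- If in one full round of the team Zeckendorf game each of 2d big-alliance players plays 1+1=2 and at least one of the d small-alliance players plays a move other than 2+2=1+3, then the number of 2's in the multiset strictly increases over that round; consequently, after d such rounds at least d copies of 2 have accumulated. -/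
namespace ZMove

theorem count_two_le {M M' : Multiset ℕ} (h : ZMove M M') :
    M.count 2 ≤ M'.count 2 + 2 := by
  cases h <;>
    simp only [Multiset.count_add, Multiset.insert_eq_cons, Multiset.count_cons,
      Multiset.count_singleton] <;> split_ifs <;> omega

theorem count_two_le_succ {M M' : Multiset ℕ} (h : ZMove M M') (h22 : ¬ MTwoTwo M M') :
    M.count 2 ≤ M'.count 2 + 1 := by
  cases h with
  | split2 N =>
    exact absurd ⟨Multiset.le_add_right _ _, by rw [add_tsub_cancel_left, add_comm]⟩ h22
  | _ =>
    simp only [Multiset.count_add, Multiset.insert_eq_cons, Multiset.count_cons,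
      Multiset.count_singleton]
    split_ifs <;> omega

end ZMove

theorem MOneOne.count_two {M M' : Multiset ℕ} (h : MOneOne M M') :
    M'.count 2 = M.count 2 + 1 := by
  obtain ⟨-, rfl⟩ := h
  simp

theorem count_two_add_le_of_moves (f : ℕ → Multiset ℕ) (s n : ℕ)
    (hmov : ∀ k < n, ZMove (f (s + k)) (f (s + k + 1)))
    {B : Finset ℕ} (hB : B ⊆ Finset.range n)
    (h11 : ∀ k ∈ B, MOneOne (f (s + k)) (f (s + k + 1)))
    {k₀ : ℕ} (hk₀ : k₀ ∈ Finset.range n \ B)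
    (h22 : ¬ MTwoTwo (f (s + k₀)) (f (s + k₀ + 1))) :
    ((f s).count 2 : ℤ) + 3 * B.card + 1 ≤ (f (s + n)).count 2 + 2 * n := by
  obtain ⟨hk₀n, hk₀B⟩ := Finset.mem_sdiff.mp hk₀
  set g : ℕ → ℤ := fun k => (f (s + k)).count 2
  -- the guaranteed change at move `k`: `+1` on `B`, `-1` at `k₀`, `-2` elsewhere
  let w : ℕ → ℤ := fun k => (if k ∈ B then 3 else 0) + (if k = k₀ then 1 else 0) - 2
  have step : ∀ k ∈ Finset.range n, w k ≤ g (k + 1) - g k := by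
    intro k hk
    have hmv := hmov k (Finset.mem_range.mp hk)
    simp only [w, g, ← add_assoc]
    by_cases hkB : k ∈ B
    · have hne : k ≠ k₀ := by rintro rfl; exact hk₀B hkB
      have := (h11 k hkB).count_two
      simp only [hkB, hne, if_true, if_false]
      omega
    · by_cases hk : k = k₀
      · subst hk
        have := hmv.count_two_le_succ h22
        simp only [hkB, if_true, if_false]
        omega
      · have := hmv.count_two_le
        simp only [hkB, hk, if_false]
        omega
  have hw : ∑ k ∈ Finset.range n, w k = 3 * B.card + 1 - 2 * n := by
    simp only [w, Finset.sum_sub_distrib, Finset.sum_add_distrib, Finset.sum_ite_mem,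
      Finset.inter_eq_right.mpr hB, Finset.sum_ite_eq', hk₀n, if_true, Finset.sum_const,
      Finset.card_range, Int.nsmul_eq_mul]
    ring
  have := Finset.sum_le_sum step
  rw [hw, Finset.sum_range_sub g n] at this
  simp only [g, add_zero] at this
  omega

theorem le_apply_of_forall_lt_succ {a : ℕ → ℕ} {d : ℕ} (h : ∀ r < d, a r < a (r + 1)) :
    ∀ r ≤ d, r ≤ a r
  | 0, _ => Nat.zero_le _
  | r + 1, hr => by
    have := le_apply_of_forall_lt_succ h r (by omega)
    have := h r (by omega)
    omega

theorem stmt_18_general (d : ℕ) (f : ℕ → Multiset ℕ)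
    (hmov : ∀ k < 3 * d * d, ZMove (f k) (f (k + 1)))
    (hround : ∀ r < d, ∃ B : Finset ℕ, B ⊆ Finset.range (3 * d) ∧
      B.card = 2 * d ∧
      (∀ k ∈ B, MOneOne (f (3 * d * r + k)) (f (3 * d * r + k + 1))) ∧
      ∃ k ∈ Finset.range (3 * d) \ B,
        ¬ MTwoTwo (f (3 * d * r + k)) (f (3 * d * r + k + 1))) :
    (∀ r < d, (f (3 * d * r)).count 2 < (f (3 * d * r + 3 * d)).count 2) ∧
    d ≤ (f (3 * d * d)).count 2 := by
  have hgain : ∀ r < d, (f (3 * d * r)).count 2 < (f (3 * d * r + 3 * d)).count 2 := by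
    intro r hr
    obtain ⟨B, hB, hcard, h11, k₀, hk₀, h22⟩ := hround r hr
    have hmov' : ∀ k < 3 * d, ZMove (f (3 * d * r + k)) (f (3 * d * r + k + 1)) := by
      intro k hk
      apply hmov
      nlinarith
    have := count_two_add_le_of_moves f _ _ hmov' hB h11 hk₀ h22
    omega
  refine ⟨hgain, le_apply_of_forall_lt_succ (a := fun r => (f (3 * d * r)).count 2) ?_ d le_rfl⟩
  intro r hr
  simpa [mul_add] using hgain r hr

/-- If in each of `d` full rounds (a round being `3d` consecutive legal moves)
the `2d` big-alliance moves are all `1+1=2` and at least one of the remaining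
`d` small-alliance moves is not `2+2=1+3`, then the number of 2's strictly
increases over each round; consequently after the `d` rounds at least `d`
copies of 2 have accumulated. -/
theorem stmt_18 (d : ℕ) (hd : 0 < d) (f : ℕ → Multiset ℕ)
    (hmov : ∀ k < 3 * d * d, ZMove (f k) (f (k + 1)))
    (hround : ∀ r < d, ∃ B : Finset ℕ, B ⊆ Finset.range (3 * d) ∧
      B.card = 2 * d ∧
      (∀ k ∈ B, MOneOne (f (3 * d * r + k)) (f (3 * d * r + k + 1))) ∧
      ∃ k ∈ Finset.range (3 * d) \ B,
        ¬ MTwoTwo (f (3 * d * r + k)) (f (3 * d * r + k + 1))) :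
    (∀ r < d, (f (3 * d * r)).count 2 < (f (3 * d * r + 3 * d)).count 2) ∧
    d ≤ (f (3 * d * d)).count 2 :=
  stmt_18_general d f hmov hround
end
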